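/- If the vertices of a translation triangle lie in the plane z = 0 of Sol, then the translation distances between them equal the Euclidean distances, and in particular the triangle inequality holds for such triangles. -/

import Mathlib

/-- Translation distance from the origin to `(x,y,z)` in Sol. -/
noncomputable def solDistO (p : ℝ × ℝ × ℝ) : ℝ :=
  if p.2.2 ≠ 0 then
    (|p.2.2| / |Real.exp p.2.2 - 1|) *
      Real.sqrt (p.1 ^ 2 * Real.exp (2 * p.2.2) + (Real.exp p.2.2 - 1) ^ 2 + p.2.1 ^ 2)
  else Real.sqrt (p.1 ^ 2 + p.2.1 ^ 2)

/-- Translation distance between two points of Sol, computed as `d^t(O, T⁻¹_P(Q))`. -/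
noncomputable def solDist (P Q : ℝ × ℝ × ℝ) : ℝ :=
  solDistO ((Q.1 - P.1) * Real.exp P.2.2, (Q.2.1 - P.2.1) * Real.exp (-P.2.2), Q.2.2 - P.2.2)

theorem solDistO_horizontal (x y : ℝ) : solDistO (x, y, 0) = √(x ^ 2 + y ^ 2) := by
  simp [solDistO]

theorem solDist_horizontal (a b a₁ b₁ : ℝ) :
    solDist (a, b, 0) (a₁, b₁, 0) = √((a - a₁) ^ 2 + (b - b₁) ^ 2) := by
  rw [solDist, sub_zero, Real.exp_neg, Real.exp_zero, inv_one, mul_one, mul_one,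
    solDistO_horizontal, sub_sq_comm a₁, sub_sq_comm b₁]

/-- The plane is modelled by `ℂ` because `ℝ × ℝ` carries the sup metric. -/
theorem solDist_horizontal_eq_dist (a b a₁ b₁ : ℝ) :
    solDist (a, b, 0) (a₁, b₁, 0) = dist (⟨a, b⟩ : ℂ) ⟨a₁, b₁⟩ := by
  rw [solDist_horizontal, Complex.dist_eq_re_im]

/-- In the plane `z = 0` of Sol, translation distances are Euclidean distances and the
triangle inequality holds. -/
theorem sol_horizontal_distances_euclidean :
    (∀ a b a₁ b₁ : ℝ, solDist (a, b, 0) (a₁, b₁, 0) =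
      Real.sqrt ((a - a₁) ^ 2 + (b - b₁) ^ 2)) ∧
    (∀ a b a₁ b₁ a₂ b₂ : ℝ,
      solDist (a, b, 0) (a₂, b₂, 0) ≤
        solDist (a, b, 0) (a₁, b₁, 0) + solDist (a₁, b₁, 0) (a₂, b₂, 0)) := by
  refine ⟨solDist_horizontal, fun a b a₁ b₁ a₂ b₂ => ?_⟩
  simp only [solDist_horizontal_eq_dist]
  exact dist_triangle _ _ _
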